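/- Let 0 ≤ k < m and let (ν; μ) be an m-standard composite partition with l(ν) = k and l(μ) < m − k. Let λ := (μ_1, …, μ_{m−k}, 1−ν_k, 1−ν_{k−1}, …, 1−ν_1) (where μ_i := 0 for i > l(μ)), an integral dominant weight of size m with λ_{m−k} = 0. Then in F: Σ_{i=0}^{m−1} ( Σ_{η ∈ A_{m−k,i}} s_η ) · y^{m−1−i−k} = Σ_{(α,β)} e_m(x) · s_{α ∪_m β̄} · y^{a−b}, where A_{m−k,i} is the set of integral dominant weights η of size m with η_j − λ_j ∈ {0,1} for all j, Σ_{j=1}^m (η_j − λ_j) = i + 1 and η_{m−k} − λ_{m−k} = 1, and where the right-hand sum runs over all pairs of partitions (α, β) with μ_i − α_i ∈ {0,1} for all i ≥ 1 and ν_i − β_i ∈ {0,1} for all i ≥ 1, with a := |μ| − |α|, b := |ν| − |β|. -/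

import Mathlib

open scoped Classical

noncomputable section

/-- The field `F = ℚ(x_1, …, x_m, y)` of rational functions in `m+1` indeterminates. -/
abbrev F (m : ℕ) : Type := FractionRing (MvPolynomial (Option (Fin m)) ℚ)

/-- The variable `x_i` as an element of `F`. -/
def Xv (m : ℕ) (i : Fin m) : F m :=
  algebraMap (MvPolynomial (Option (Fin m)) ℚ) (F m) (MvPolynomial.X (some i))

/-- The variable `y` as an element of `F`. -/
def Yv (m : ℕ) : F m :=
  algebraMap (MvPolynomial (Option (Fin m)) ℚ) (F m) (MvPolynomial.X none)

/-- `a_α = ∑_{w ∈ S_m} ε(w) · w(x₁^{α₁} ⋯ x_m^{α_m})`, where `w` permutes the variables. -/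
def aAlt (m : ℕ) (α : Fin m → ℤ) : F m :=
  ∑ w : Equiv.Perm (Fin m), (Equiv.Perm.sign w : ℤ) • ∏ i, Xv m (w i) ^ α i

/-- `δ = (m-1, m-2, …, 1, 0)`. -/
def deltaW (m : ℕ) : Fin m → ℤ := fun i => (m : ℤ) - 1 - (i : ℕ)

/-- The Schur function `s_λ = a_{λ+δ} / a_δ` of an integral dominant weight. -/
def schurW (m : ℕ) (lam : Fin m → ℤ) : F m :=
  aAlt m (fun i => lam i + deltaW m i) / aAlt m (deltaW m)

/-- The elementary symmetric polynomial `e_i(x_1, …, x_m)` in `F`. -/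
def eX (m : ℕ) (i : ℕ) : F m :=
  ∑ s ∈ Finset.powersetCard i (Finset.univ : Finset (Fin m)), ∏ j ∈ s, Xv m j

/-- The complete homogeneous symmetric polynomial `h_r(x_1, …, x_m)` in `F`. -/
def hXF (m : ℕ) (r : ℕ) : F m :=
  ∑ d ∈ (Finset.univ : Finset (Fin m)).sym r, ((d : Multiset (Fin m)).map (Xv m)).prod

/-- `ḣ_r(x) = h_r(x_1⁻¹, …, x_m⁻¹)`. -/
def hdotXF (m : ℕ) (r : ℕ) : F m :=
  ∑ d ∈ (Finset.univ : Finset (Fin m)).sym r,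
    ((d : Multiset (Fin m)).map (fun j => (Xv m j)⁻¹)).prod

/-- `h_r(x)` for `r : ℤ`, with `h_r = 0` for `r < 0`. -/
def hXZ (m : ℕ) (r : ℤ) : F m := if 0 ≤ r then hXF m r.toNat else 0

/-- `ḣ_r(x)` for `r : ℤ`, with `ḣ_r = 0` for `r < 0`. -/
def hdotXZ (m : ℕ) (r : ℤ) : F m := if 0 ≤ r then hdotXF m r.toNat else 0

/-- The complete super-symmetric function `h_r(x/y) = ∑_{k=0}^r h_k(x) y^{r-k}` (`0` for `r < 0`). -/
def hSup (m : ℕ) (r : ℤ) : F m :=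
  if 0 ≤ r then ∑ k ∈ Finset.range (r.toNat + 1), hXF m k * Yv m ^ (r.toNat - k) else 0

/-- `ḣ_r(x/y) = ∑_{k=0}^r ḣ_k(x) y^{-(r-k)}` (`0` for `r < 0`). -/
def hdotSup (m : ℕ) (r : ℤ) : F m :=
  if 0 ≤ r then ∑ k ∈ Finset.range (r.toNat + 1), hdotXF m k * (Yv m)⁻¹ ^ (r.toNat - k) else 0

/-- The super-symmetric function `s_{(ν;μ)}(x/y)` of a composite partition `(ν; μ)` with
`q = l(ν)`, `p = l(μ)`, given as the `(q+p) × (q+p)` block determinant (0-based indices). -/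
def sSup (m : ℕ) (ν μ : ℕ → ℕ) (q p : ℕ) : F m :=
  Matrix.det (Matrix.of fun r c : Fin (q + p) =>
    if (c : ℕ) < q then hdotSup m ((ν (q - 1 - (c : ℕ)) : ℤ) + (c : ℕ) - (r : ℕ))
    else hSup m ((μ ((c : ℕ) - q) : ℤ) + (r : ℕ) - (c : ℕ)))

/-- `s^{det}_{(ν;μ)}(x)`: the same block determinant built from `h_s(x)` and `ḣ_s(x)`. -/
def sDet (m : ℕ) (ν μ : ℕ → ℕ) (q p : ℕ) : F m :=
  Matrix.det (Matrix.of fun r c : Fin (q + p) =>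
    if (c : ℕ) < q then hdotXZ m ((ν (q - 1 - (c : ℕ)) : ℤ) + (c : ℕ) - (r : ℕ))
    else hXZ m ((μ ((c : ℕ) - q) : ℤ) + (r : ℕ) - (c : ℕ)))

/-- An integral dominant weight of size `m`: `λ_1 ≥ λ_2 ≥ ⋯ ≥ λ_m`. -/
def IsDom (m : ℕ) (lam : Fin m → ℤ) : Prop := ∀ i j : Fin m, i ≤ j → lam j ≤ lam i

/-- `f` is (the part function of) a partition with exactly `q` (positive) parts,
0-based indexing: the parts are `f 0 ≥ f 1 ≥ ⋯`. -/
def IsPartitionOfLen (f : ℕ → ℕ) (q : ℕ) : Prop :=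
  (∀ i j : ℕ, i ≤ j → f j ≤ f i) ∧ (∀ i : ℕ, 0 < f i ↔ i < q)

end

/-- The integral dominant weight `α ∪_m β̄ = (α_1, …, α_{l(α)}, 0, …, 0, -β_{l(β)}, …, -β_1)`
attached to an `m`-standard composite partition `(β; α)` (0-based indices): its `i`-th
entry is `α_i - β_{m-1-i}`. -/
def cupW (m : ℕ) (α β : ℕ → ℕ) : Fin m → ℤ := fun i =>
  (α (i : ℕ) : ℤ) - (β (m - 1 - (i : ℕ)) : ℤ)

/-- The integral dominant weight `λ = (μ_1, …, μ_{m-k}, 1-ν_k, …, 1-ν_1)` attached to an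
`m`-standard composite partition `(ν; μ)` with `l(ν) = k`, `l(μ) ≤ m - k`
(0-based indices, `μ_i := 0` for `i > l(μ)`). -/
def lamOfPair (m k : ℕ) (ν μ : ℕ → ℕ) : Fin m → ℤ := fun j =>
  if (j : ℕ) < m - k then (μ (j : ℕ) : ℤ) else 1 - (ν (m - 1 - (j : ℕ)) : ℤ)

/-!
Encode `η ∈ ⋃ᵢ A_{m-k,i}` by `η - 1`. The pivot entry `η_{m-k}` equals `1`, so by dominance
`η - 1` is `≥ 0` up to the pivot and `≤ 0` after it: `η - 1 = α ∪_m β̄` for two partitions `α`,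
`β`, and `η - λ ∈ {0,1}^m` says precisely that `μ/α` and `ν/β` are vertical strips. This matches
the two index sets bijectively, and termwise `s_η = e_m(x) s_{η-1}` (as `a_{κ+1} = x₁⋯x_m a_κ`)
while `∑ⱼ (η_j - λ_j) = (m - k) - a + b` matches the powers of `y`.
-/

open Finset

lemma Xv_ne_zero (m : ℕ) (i : Fin m) : Xv m i ≠ 0 :=
  (map_ne_zero_iff _ (IsFractionRing.injective _ _)).2 (MvPolynomial.X_ne_zero _)

lemma eX_self (m : ℕ) : eX m m = ∏ i, Xv m i := by
  have h : powersetCard m (univ : Finset (Fin m)) = {univ} := by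
    simpa using powersetCard_self (univ : Finset (Fin m))
  rw [eX, h, sum_singleton]

lemma aAlt_add_one (m : ℕ) (κ : Fin m → ℤ) :
    aAlt m (fun i => κ i + 1) = (∏ i, Xv m i) * aAlt m κ := by
  rw [aAlt, aAlt, mul_sum]
  refine sum_congr rfl fun w _ => ?_
  rw [mul_smul_comm, ← Equiv.prod_comp w (Xv m), ← prod_mul_distrib]
  simp only [zpow_add_one₀ (Xv_ne_zero m _), mul_comm]

lemma schurW_add_one (m : ℕ) (κ : Fin m → ℤ) :
    schurW m (fun i => κ i + 1) = eX m m * schurW m κ := by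
  rw [schurW, schurW, eX_self, ← mul_div_assoc, ← aAlt_add_one]
  simp only [add_right_comm]

lemma sum_univ_fin_ite_lt {M : Type*} [AddCommMonoid M] {m n : ℕ} (hn : n ≤ m)
    (a b : ℕ → M) :
    ∑ j : Fin m, (if (j : ℕ) < n then a j else b (m - 1 - j)) =
      ∑ i ∈ range n, a i + ∑ i ∈ range (m - n), b i := by
  obtain ⟨d, rfl⟩ := Nat.exists_eq_add_of_le hn
  rw [Nat.add_sub_cancel_left,
    Fin.sum_univ_eq_sum_range (fun j => if j < n then a j else b (n + d - 1 - j)), sum_range_add,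
    ← sum_range_reflect b d]
  congr 1
  · exact sum_congr rfl fun i hi => if_pos (mem_range.1 hi)
  · refine sum_congr rfl fun i hi => ?_
    rw [if_neg (by omega)]
    congr 1
    omega

lemma finsum_eq_sum_range_of_eq_zero {M : Type*} [AddCommMonoid M] {f : ℕ → M} {n : ℕ}
    (hf : ∀ i, n ≤ i → f i = 0) : ∑ᶠ i, f i = ∑ i ∈ range n, f i :=
  finsum_eq_sum_of_support_subset f fun i hi => by
    by_contra h
    exact hi (hf i (by simpa using h))

lemma sum_range_finsum_ite_mul {ι R : Type*} [CommSemiring R] {s : Set ι} (hs : s.Finite)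
    {n : ℕ} {c : ι → ℤ} (hc : ∀ a ∈ s, c a ∈ Set.Icc 1 (n : ℤ)) {P : ℕ → ι → Prop}
    [∀ i, DecidablePred (P i)] (hP : ∀ i a, P i a ↔ a ∈ s ∧ c a = i + 1) (f : ι → R)
    (g : ℕ → R) :
    ∑ i ∈ range n, (∑ᶠ a, if P i a then f a else 0) * g i =
      ∑ᶠ a ∈ s, f a * g (c a - 1).toNat := by
  have hfiber : ∀ i : ℕ, (∑ᶠ a, if P i a then f a else 0) =
      ∑ a ∈ hs.toFinset, if c a = i + 1 then f a else 0 := by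
    intro i
    rw [finsum_eq_sum_of_support_subset _ (s := hs.toFinset) fun a ha => ?_]
    · exact sum_congr rfl fun a ha =>
        if_congr ((hP i a).trans (and_iff_right (hs.mem_toFinset.1 ha))) rfl rfl
    · by_contra h
      simp_all
  simp_rw [hfiber, sum_mul, finsum_mem_eq_finite_toFinset_sum _ hs]
  rw [sum_comm]
  refine sum_congr rfl fun a ha => ?_
  obtain ⟨h₁, h₂⟩ := hc a (hs.mem_toFinset.1 ha)
  rw [sum_eq_single (c a - 1).toNat]
  · rw [if_pos (by omega)]
  · intro i _ hi
    rw [if_neg (by omega), zero_mul]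
  · intro h
    exact absurd (mem_range.2 (by omega)) h

lemma finsum_ite_eq_finsum_mem_of_bijOn {α β M : Type*} [AddCommMonoid M] {p : α → Prop}
    [DecidablePred p] {t : Set β} {f : α → M} {g : β → M} (e : α → β)
    (he : {x | p x}.BijOn e t) (hfg : ∀ x, p x → f x = g (e x)) :
    ∑ᶠ x, (if p x then f x else 0) = ∑ᶠ y ∈ t, g y := by
  rw [← finsum_mem_eq_of_bijOn e he hfg]
  exact finsum_congr fun x => finsum_eq_if.symm

lemma IsPartitionOfLen.eq_zero {f : ℕ → ℕ} {q i : ℕ} (hf : IsPartitionOfLen f q)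
    (hi : q ≤ i) : f i = 0 := by
  have := hf.2 i
  omega

lemma exists_isPartitionOfLen_of_antitone {f : ℕ → ℕ} (hf : Antitone f) {N : ℕ}
    (hN : f N = 0) : ∃ q, IsPartitionOfLen f q := by
  have hex : ∃ n, f n = 0 := ⟨N, hN⟩
  refine ⟨Nat.find hex, fun i j hij => hf hij, fun i => ⟨fun hpos => ?_, fun hi => ?_⟩⟩
  · by_contra! hle
    have := hf hle
    rw [Nat.find_spec hex] at this
    omega
  · exact Nat.pos_of_ne_zero (Nat.find_min hex hi)

lemma IsPartitionOfLen.eq_zero_of_strip {α μ : ℕ → ℕ} {p i : ℕ}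
    (hμ : IsPartitionOfLen μ p) (h : ∀ i, α i = μ i ∨ α i + 1 = μ i) (hi : p ≤ i) : α i = 0 := by
  have := hμ.eq_zero hi
  have := h i
  omega

lemma isDom_cupW {m : ℕ} {α β : ℕ → ℕ} (hα : Antitone α) (hβ : Antitone β) :
    IsDom m (cupW m α β) := by
  intro i j hij
  have h₁ := hα (show (i : ℕ) ≤ j from hij)
  have h₂ := hβ (show m - 1 - (j : ℕ) ≤ m - 1 - i by omega)
  simp only [cupW]
  omega

lemma cupW_apply_of_eq_zero {m k : ℕ} {α β : ℕ → ℕ}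
    (hα : ∀ i, m - k ≤ i → α i = 0) (hβ : ∀ i, k ≤ i → β i = 0) (j : Fin m) :
    cupW m α β j = if (j : ℕ) < m - k then (α j : ℤ) else -(β (m - 1 - j) : ℤ) := by
  unfold cupW
  split_ifs with hj
  · rw [hβ _ (by omega)]
    ring
  · rw [hα _ (by omega)]
    ring

lemma cupW_add_one_sub_lamOfPair {m k : ℕ} {α β ν μ : ℕ → ℕ}
    (hα : ∀ i, m - k ≤ i → α i = 0) (hβ : ∀ i, k ≤ i → β i = 0) (j : Fin m) :
    cupW m α β j + 1 - lamOfPair m k ν μ j =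
      if (j : ℕ) < m - k then (α j : ℤ) + 1 - μ j
      else (ν (m - 1 - j) : ℤ) - β (m - 1 - j) := by
  rw [cupW_apply_of_eq_zero hα hβ, lamOfPair]
  split_ifs <;> ring

/-- The union over `i` of the sets `A_{m-k,i}`. -/
def atypicalWeights (m k : ℕ) (hk : k < m) (ν μ : ℕ → ℕ) : Set (Fin m → ℤ) :=
  {η | IsDom m η ∧
    (∀ j : Fin m, η j - lamOfPair m k ν μ j = 0 ∨ η j - lamOfPair m k ν μ j = 1) ∧
    η ⟨m - k - 1, by omega⟩ - lamOfPair m k ν μ ⟨m - k - 1, by omega⟩ = 1}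

/-- The pairs of partitions `(α, β)` such that `μ / α` and `ν / β` are vertical strips. -/
def verticalStripPairs (ν μ : ℕ → ℕ) : Set ((ℕ → ℕ) × (ℕ → ℕ)) :=
  {αβ | (∃ la, IsPartitionOfLen αβ.1 la) ∧ (∃ lb, IsPartitionOfLen αβ.2 lb) ∧
    (∀ i, αβ.1 i = μ i ∨ αβ.1 i + 1 = μ i) ∧ (∀ i, αβ.2 i = ν i ∨ αβ.2 i + 1 = ν i)}

/-- `(cupLeft m k η, cupRight m k η)` inverts `(α, β) ↦ cupW m α β + 1` on
`atypicalWeights`. -/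
def cupLeft (m k : ℕ) (η : Fin m → ℤ) : ℕ → ℕ :=
  fun i => if h : i < m - k then (η ⟨i, by omega⟩ - 1).toNat else 0

def cupRight (m k : ℕ) (η : Fin m → ℤ) : ℕ → ℕ :=
  fun i => if h : i < k ∧ i < m then (1 - η ⟨m - 1 - i, by omega⟩).toNat else 0

section AtypicalCase

variable {m k p : ℕ} {ν μ : ℕ → ℕ}

lemma finite_atypicalWeights (hk : k < m) : (atypicalWeights m k hk ν μ).Finite := by
  refine (Set.Finite.pi' fun j => Set.finite_Icc (lamOfPair m k ν μ j)
    (lamOfPair m k ν μ j + 1)).subset fun η hη j => ?_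
  have := hη.2.1 j
  simp only [Set.mem_Icc]
  omega

lemma sum_sub_lamOfPair_mem_Icc (hk : k < m) {η : Fin m → ℤ}
    (hη : η ∈ atypicalWeights m k hk ν μ) :
    ∑ j, (η j - lamOfPair m k ν μ j) ∈ Set.Icc 1 (m : ℤ) := by
  have h01 : ∀ j, 0 ≤ η j - lamOfPair m k ν μ j ∧ η j - lamOfPair m k ν μ j ≤ 1 := by
    intro j
    have := hη.2.1 j
    omega
  constructor
  · rw [← hη.2.2]
    exact single_le_sum (fun j _ => (h01 j).1) (mem_univ _)
  · simpa using sum_le_sum fun j (_ : j ∈ univ) => (h01 j).2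

lemma atypicalWeights_apply_pivot (hk : k < m) (hp : IsPartitionOfLen μ p) (hpk : p < m - k)
    {η : Fin m → ℤ} (hη : η ∈ atypicalWeights m k hk ν μ) : η ⟨m - k - 1, by omega⟩ = 1 := by
  have h := hη.2.2
  simp only [lamOfPair, if_pos (show m - k - 1 < m - k by omega),
    hp.eq_zero (show p ≤ m - k - 1 by omega)] at h
  omega

lemma one_le_of_mem_atypicalWeights (hk : k < m) (hp : IsPartitionOfLen μ p)
    (hpk : p < m - k) {η : Fin m → ℤ} (hη : η ∈ atypicalWeights m k hk ν μ) {j : Fin m}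
    (hj : (j : ℕ) < m - k) : 1 ≤ η j := by
  rw [← atypicalWeights_apply_pivot hk hp hpk hη]
  exact hη.1 _ _ (show (j : ℕ) ≤ m - k - 1 by omega)

lemma le_one_of_mem_atypicalWeights (hk : k < m) (hp : IsPartitionOfLen μ p)
    (hpk : p < m - k) {η : Fin m → ℤ} (hη : η ∈ atypicalWeights m k hk ν μ) {j : Fin m}
    (hj : m - k ≤ (j : ℕ)) : η j ≤ 1 := by
  rw [← atypicalWeights_apply_pivot hk hp hpk hη]
  exact hη.1 _ _ (show m - k - 1 ≤ (j : ℕ) by omega)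

lemma eq_zero_of_mem_verticalStripPairs (hν : IsPartitionOfLen ν k)
    (hp : IsPartitionOfLen μ p) (hpk : p < m - k) {αβ : (ℕ → ℕ) × (ℕ → ℕ)}
    (h : αβ ∈ verticalStripPairs ν μ) :
    (∀ i, m - k ≤ i → αβ.1 i = 0) ∧ (∀ i, k ≤ i → αβ.2 i = 0) :=
  ⟨fun _ hi => hp.eq_zero_of_strip h.2.2.1 (by omega),
    fun _ hi => hν.eq_zero_of_strip h.2.2.2 hi⟩

lemma mapsTo_cupW_add_one (hk : k < m) (hν : IsPartitionOfLen ν k) (hp : IsPartitionOfLen μ p)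
    (hpk : p < m - k) :
    Set.MapsTo (fun αβ j => cupW m αβ.1 αβ.2 j + 1) (verticalStripPairs ν μ)
      (atypicalWeights m k hk ν μ) := by
  rintro ⟨α, β⟩ hαβ
  obtain ⟨hα0, hβ0⟩ := eq_zero_of_mem_verticalStripPairs hν hp hpk hαβ
  obtain ⟨⟨la, hα⟩, ⟨lb, hβ⟩, hαμ, hβν⟩ := hαβ
  dsimp only at hα hβ hαμ hβν hα0 hβ0 ⊢
  refine ⟨fun i j hij => ?_, fun j => ?_, ?_⟩
  · have := isDom_cupW (m := m) (α := α) (β := β) (fun _ _ h => hα.1 _ _ h)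
      (fun _ _ h => hβ.1 _ _ h) i j hij
    simp only
    omega
  · rw [cupW_add_one_sub_lamOfPair hα0 hβ0]
    have := hαμ j
    have := hβν (m - 1 - j)
    split_ifs <;> omega
  · rw [cupW_add_one_sub_lamOfPair hα0 hβ0, if_pos (show m - k - 1 < m - k by omega),
      hp.eq_zero_of_strip hαμ (show p ≤ m - k - 1 by omega),
      hp.eq_zero (show p ≤ m - k - 1 by omega)]
    simp

lemma injOn_cupW_add_one (hν : IsPartitionOfLen ν k) (hp : IsPartitionOfLen μ p)
    (hpk : p < m - k) :
    Set.InjOn (fun αβ j => cupW m αβ.1 αβ.2 j + 1) (verticalStripPairs ν μ) := by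
  rintro ⟨α, β⟩ hαβ ⟨α', β'⟩ hαβ' h
  obtain ⟨hα0, hβ0⟩ := eq_zero_of_mem_verticalStripPairs hν hp hpk hαβ
  obtain ⟨hα0', hβ0'⟩ := eq_zero_of_mem_verticalStripPairs hν hp hpk hαβ'
  dsimp only at hα0 hβ0 hα0' hβ0' h
  have hcup (j : Fin m) : cupW m α β j = cupW m α' β' j := by
    simpa using congrFun h j
  simp only [cupW_apply_of_eq_zero hα0 hβ0, cupW_apply_of_eq_zero hα0' hβ0'] at hcup
  rw [Prod.mk.injEq]
  constructor
  · funext i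
    by_cases hi : i < m - k
    · simpa [hi] using hcup ⟨i, by omega⟩
    · rw [hα0 i (by omega), hα0' i (by omega)]
  · funext i
    by_cases hi : i < k
    · simpa [show ¬ m - 1 - i < m - k by omega, show m - 1 - (m - 1 - i) = i by omega]
        using hcup ⟨m - 1 - i, by omega⟩
    · rw [hβ0 i (by omega), hβ0' i (by omega)]

lemma cupLeft_mem (hk : k < m) (hp : IsPartitionOfLen μ p) (hpk : p < m - k) {η : Fin m → ℤ}
    (hη : η ∈ atypicalWeights m k hk ν μ) :
    (∃ la, IsPartitionOfLen (cupLeft m k η) la) ∧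
      ∀ i, cupLeft m k η i = μ i ∨ cupLeft m k η i + 1 = μ i := by
  refine ⟨exists_isPartitionOfLen_of_antitone (N := m - k) (fun i j hij => ?_)
    (dif_neg (lt_irrefl _)), fun i => ?_⟩
  · unfold cupLeft
    split_ifs with hj hi
    · have := hη.1 ⟨i, by omega⟩ ⟨j, by omega⟩ hij
      omega
    all_goals omega
  · unfold cupLeft
    split_ifs with hi
    · have h01 := hη.2.1 ⟨i, by omega⟩
      have := one_le_of_mem_atypicalWeights hk hp hpk hη (j := ⟨i, by omega⟩) hi
      simp only [lamOfPair, if_pos hi] at h01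
      omega
    · exact .inl (hp.eq_zero (by omega)).symm

lemma cupRight_mem (hk : k < m) (hν : IsPartitionOfLen ν k) (hp : IsPartitionOfLen μ p)
    (hpk : p < m - k) {η : Fin m → ℤ} (hη : η ∈ atypicalWeights m k hk ν μ) :
    (∃ lb, IsPartitionOfLen (cupRight m k η) lb) ∧
      ∀ i, cupRight m k η i = ν i ∨ cupRight m k η i + 1 = ν i := by
  refine ⟨exists_isPartitionOfLen_of_antitone (N := k) (fun i j hij => ?_)
    (dif_neg fun h => lt_irrefl _ h.1), fun i => ?_⟩
  · unfold cupRight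
    split_ifs with hj hi
    · have := hη.1 ⟨m - 1 - j, by omega⟩ ⟨m - 1 - i, by omega⟩ (Fin.mk_le_mk.2 (by omega))
      omega
    all_goals omega
  · unfold cupRight
    split_ifs with hi
    · have h01 := hη.2.1 ⟨m - 1 - i, by omega⟩
      have := le_one_of_mem_atypicalWeights hk hp hpk hη (j := ⟨m - 1 - i, by omega⟩)
        (show m - k ≤ m - 1 - i by omega)
      simp only [lamOfPair, if_neg (show ¬ m - 1 - i < m - k by omega),
        show m - 1 - (m - 1 - i) = i by omega] at h01
      omega
    · exact .inl (hν.eq_zero (by omega)).symm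

lemma cupW_cupLeft_cupRight_add_one (hk : k < m) (hp : IsPartitionOfLen μ p)
    (hpk : p < m - k) {η : Fin m → ℤ} (hη : η ∈ atypicalWeights m k hk ν μ) :
    (fun j => cupW m (cupLeft m k η) (cupRight m k η) j + 1) = η := by
  funext j
  rw [cupW_apply_of_eq_zero (k := k) (fun i hi => dif_neg (by omega))
    (fun i hi => dif_neg (by omega))]
  split_ifs with hj
  · have := one_le_of_mem_atypicalWeights hk hp hpk hη hj
    simp only [cupLeft, dif_pos hj, Fin.eta]
    omega
  · have := le_one_of_mem_atypicalWeights hk hp hpk hη (j := j) (by omega)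
    simp only [cupRight, dif_pos (show m - 1 - j < k ∧ m - 1 - j < m by omega),
      show m - 1 - (m - 1 - (j : ℕ)) = j by omega, Fin.eta]
    omega

lemma bijOn_cupW_add_one (hk : k < m) (hν : IsPartitionOfLen ν k) (hp : IsPartitionOfLen μ p)
    (hpk : p < m - k) :
    Set.BijOn (fun αβ j => cupW m αβ.1 αβ.2 j + 1) (verticalStripPairs ν μ)
      (atypicalWeights m k hk ν μ) :=
  ⟨mapsTo_cupW_add_one hk hν hp hpk, injOn_cupW_add_one hν hp hpk, fun η hη =>
    ⟨(cupLeft m k η, cupRight m k η),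
      ⟨(cupLeft_mem hk hp hpk hη).1, (cupRight_mem hk hν hp hpk hη).1,
        (cupLeft_mem hk hp hpk hη).2, (cupRight_mem hk hν hp hpk hη).2⟩,
      cupW_cupLeft_cupRight_add_one hk hp hpk hη⟩⟩

lemma finsum_sub_sub_finsum_sub (hk : k < m) (hν : IsPartitionOfLen ν k)
    (hp : IsPartitionOfLen μ p) (hpk : p < m - k) {αβ : (ℕ → ℕ) × (ℕ → ℕ)}
    (h : αβ ∈ verticalStripPairs ν μ) :
    (∑ᶠ i, ((μ i : ℤ) - αβ.1 i)) - ∑ᶠ i, ((ν i : ℤ) - αβ.2 i) =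
      m - k - ∑ j : Fin m, (cupW m αβ.1 αβ.2 j + 1 - lamOfPair m k ν μ j) := by
  obtain ⟨hα0, hβ0⟩ := eq_zero_of_mem_verticalStripPairs hν hp hpk h
  simp_rw [cupW_add_one_sub_lamOfPair hα0 hβ0]
  rw [sum_univ_fin_ite_lt (by omega) (fun i => (αβ.1 i : ℤ) + 1 - μ i)
      (fun i => (ν i : ℤ) - αβ.2 i), Nat.sub_sub_self hk.le,
    finsum_eq_sum_range_of_eq_zero (n := m - k) fun i hi => by
      rw [hα0 i hi, hp.eq_zero (by omega), sub_self],
    finsum_eq_sum_range_of_eq_zero (n := k) fun i hi => by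
      rw [hβ0 i hi, hν.eq_zero hi, sub_self]]
  simp only [sum_sub_distrib, sum_add_distrib, sum_const, card_range, nsmul_eq_mul, mul_one,
    Nat.cast_sub hk.le]
  ring

end AtypicalCase

/-- Equation (20) of the paper, the atypical case identity. For an
`m`-standard composite partition `(ν; μ)` with `l(ν) = k < m`, `l(μ) < m - k`, and
`λ = (μ_1, …, μ_{m-k}, 1-ν_k, …, 1-ν_1)` (so `λ_{m-k} = 0`):
`∑_{i=0}^{m-1} (∑_{η ∈ A_{m-k,i}} s_η(x)) y^{m-1-i-k} = ∑_{(α,β)} e_m(x) s_{(β;α)}(x) y^{a-b}`,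
where `A_{m-k,i}` consists of the integral dominant weights `η` of size `m` with
`η_j - λ_j ∈ {0,1}`, `∑_j (η_j - λ_j) = i + 1` and `η_{m-k} - λ_{m-k} = 1`, and the sum
on the right runs over pairs of partitions `(α, β)` with `μ_i - α_i ∈ {0,1}`,
`ν_i - β_i ∈ {0,1}`, with `a = |μ| - |α|`, `b = |ν| - |β|`. -/
theorem atypical_case_identity (m k : ℕ) (hk : k < m) (ν μ : ℕ → ℕ)
    (hν : IsPartitionOfLen ν k) (p : ℕ) (hp : IsPartitionOfLen μ p) (hpk : p < m - k) :
    (∑ i ∈ Finset.range m,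
      (∑ᶠ η : Fin m → ℤ,
        if IsDom m η ∧
            (∀ j : Fin m, η j - lamOfPair m k ν μ j = 0 ∨ η j - lamOfPair m k ν μ j = 1) ∧
            (∑ j : Fin m, (η j - lamOfPair m k ν μ j)) = (i : ℤ) + 1 ∧
            η ⟨m - k - 1, by omega⟩ - lamOfPair m k ν μ ⟨m - k - 1, by omega⟩ = 1
        then schurW m η else 0) * Yv m ^ ((m : ℤ) - 1 - i - k)) =
    ∑ᶠ αβ : (ℕ → ℕ) × (ℕ → ℕ),
      if (∃ la, IsPartitionOfLen αβ.1 la) ∧ (∃ lb, IsPartitionOfLen αβ.2 lb) ∧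
          (∀ i, αβ.1 i = μ i ∨ αβ.1 i + 1 = μ i) ∧ (∀ i, αβ.2 i = ν i ∨ αβ.2 i + 1 = ν i)
      then eX m m * schurW m (cupW m αβ.1 αβ.2) *
        Yv m ^ ((∑ᶠ i : ℕ, ((μ i : ℤ) - αβ.1 i)) - ∑ᶠ i : ℕ, ((ν i : ℤ) - αβ.2 i))
      else 0 := by
  refine (sum_range_finsum_ite_mul (finite_atypicalWeights (ν := ν) (μ := μ) hk)
    (fun _ => sum_sub_lamOfPair_mem_Icc hk) (fun i η => ?_) _ _).trans ?_
  · exact ⟨fun ⟨hdom, h01, hsum, hpivot⟩ => ⟨⟨hdom, h01, hpivot⟩, hsum⟩,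
      fun ⟨⟨hdom, h01, hpivot⟩, hsum⟩ => ⟨hdom, h01, hsum, hpivot⟩⟩
  refine (finsum_ite_eq_finsum_mem_of_bijOn _ (bijOn_cupW_add_one hk hν hp hpk)
    fun αβ hαβ => ?_).symm
  obtain ⟨hsum, -⟩ := sum_sub_lamOfPair_mem_Icc hk (mapsTo_cupW_add_one hk hν hp hpk hαβ)
  rw [← schurW_add_one, finsum_sub_sub_finsum_sub hk hν hp hpk hαβ]
  beta_reduce at hsum ⊢
  congr 2
  omega
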